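/- Every finitely injective K-bilinear space is infinite dimensional and non-degenerate. -/

import Mathlib

/-!
Extending the embedding of the zero space shows that every finite dimensional bilinear space
embeds in `V`; with the zero form on `K^(dim V + 1)` this rules out finite dimension. A nonzero
vector `x` in the left or right radical is isotropic, so the line `K x` extends to a hyperbolic
plane, giving a partner `y` with `BV x y = BV y x = 1`, a contradiction.
-/

universe u

/-- A bilinear space `(V, BV)` is finitely injective if every bilinear monomorphism from a
finite dimensional bilinear space `A` into `V` extends along any bilinear monomorphism
from `A` into a finite dimensional bilinear space `B`. -/
def FinitelyInjective (K : Type u) [Field K] (V : Type u) [AddCommGroup V] [Module K V]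
    (BV : V →ₗ[K] V →ₗ[K] K) : Prop :=
  ∀ (A B : Type u) [AddCommGroup A] [Module K A] [AddCommGroup B] [Module K B],
    ∀ (BA : A →ₗ[K] A →ₗ[K] K) (BB : B →ₗ[K] B →ₗ[K] K),
    FiniteDimensional K A → FiniteDimensional K B →
    ∀ ι : A →ₗ[K] B, Function.Injective ι → (∀ x y : A, BB (ι x) (ι y) = BA x y) →
    ∀ f : A →ₗ[K] V, Function.Injective f → (∀ x y : A, BV (f x) (f y) = BA x y) →
    ∃ g : B →ₗ[K] V, Function.Injective g ∧ (∀ x y : B, BV (g x) (g y) = BB x y) ∧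
      g ∘ₗ ι = f

def hyperbolicForm (K : Type u) [Field K] : (K × K) →ₗ[K] (K × K) →ₗ[K] K :=
  LinearMap.mk₂ K (fun u v => u.1 * v.2 + u.2 * v.1)
    (by intros; simp only [Prod.fst_add, Prod.snd_add]; ring)
    (by intros; simp only [Prod.smul_fst, Prod.smul_snd, smul_eq_mul]; ring)
    (by intros; simp only [Prod.fst_add, Prod.snd_add]; ring)
    (by intros; simp only [Prod.smul_fst, Prod.smul_snd, smul_eq_mul]; ring)

namespace FinitelyInjective

variable {K : Type u} [Field K] {V : Type u} [AddCommGroup V] [Module K V]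
  {BV : V →ₗ[K] V →ₗ[K] K}

theorem exists_injective_isometry (hV : FinitelyInjective K V BV) (B : Type u)
    [AddCommGroup B] [Module K B] [FiniteDimensional K B] (BB : B →ₗ[K] B →ₗ[K] K) :
    ∃ g : B →ₗ[K] V, Function.Injective g ∧ ∀ x y : B, BV (g x) (g y) = BB x y := by
  obtain ⟨g, hg, hBg, -⟩ := hV PUnit B 0 BB inferInstance inferInstance
    0 (fun a b _ => Subsingleton.elim a b) (by simp)
    0 (fun a b _ => Subsingleton.elim a b) (by simp)
  exact ⟨g, hg, hBg⟩

theorem not_finiteDimensional (hV : FinitelyInjective K V BV) : ¬ FiniteDimensional K V := by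
  intro hfd
  obtain ⟨g, hg, -⟩ := hV.exists_injective_isometry (Fin (Module.finrank K V + 1) → K) 0
  have := LinearMap.finrank_le_finrank_of_injective hg
  simp at this

theorem exists_apply_eq_one_of_isotropic (hV : FinitelyInjective K V BV) {x : V} (hx : x ≠ 0)
    (hxx : BV x x = 0) : ∃ y : V, BV x y = 1 ∧ BV y x = 1 := by
  obtain ⟨g, -, hBg, hgx⟩ := hV K (K × K) 0 (hyperbolicForm K) inferInstance inferInstance
    (LinearMap.inl K K K) LinearMap.inl_injective (by simp [hyperbolicForm])
    (LinearMap.toSpanSingleton K V x) (smul_left_injective K hx) (by simp [hxx])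
  have hg : g (1, 0) = x := by simpa using LinearMap.congr_fun hgx 1
  refine ⟨g (0, 1), ?_, ?_⟩ <;> simp [← hg, hBg, hyperbolicForm]

end FinitelyInjective

theorem finitelyInjective_infiniteDimensional_nondegenerate
    {K : Type u} [Field K] {V : Type u} [AddCommGroup V] [Module K V]
    (BV : V →ₗ[K] V →ₗ[K] K) (hV : FinitelyInjective K V BV) :
    ¬ FiniteDimensional K V ∧
      (∀ x : V, (∀ y : V, BV x y = 0) → x = 0) ∧
      (∀ y : V, (∀ x : V, BV x y = 0) → y = 0) := by
  refine ⟨hV.not_finiteDimensional, fun x hx => ?_, fun y hy => ?_⟩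
  · by_contra hx0
    obtain ⟨y, hxy, -⟩ := hV.exists_apply_eq_one_of_isotropic hx0 (hx x)
    exact zero_ne_one ((hx y).symm.trans hxy)
  · by_contra hy0
    obtain ⟨x, -, hxy⟩ := hV.exists_apply_eq_one_of_isotropic hy0 (hy y)
    exact zero_ne_one ((hy x).symm.trans hxy)
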